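/- arXiv:0811.0606 — 2 statements merged into one kernel-verified Lean document; each statement's English description precedes it below -/
import Mathlib

section
/- Let A, B, C be nonzero real numbers such that D = AB + AC + BC ≠ 0 and D/(ABC) > 0. Let σ be the signature of the symmetric matrix [[A+C, -C],[-C, B+C]]. Then σ = sign(A) + sign(B) + sign(C) - 1. -/
open scoped Classical

/-- The signature of a real Hermitian (symmetric) matrix: number of positive
eigenvalues minus number of negative eigenvalues, counted with multiplicity. -/
noncomputable def matSig {m : ℕ} (A : Matrix (Fin m) (Fin m) ℝ) (hA : A.IsHermitian) : ℤ :=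
  ((Finset.univ.filter fun i => 0 < hA.eigenvalues i).card : ℤ) -
  ((Finset.univ.filter fun i => hA.eigenvalues i < 0).card : ℤ)

lemma symm2_isHermitian (x z y : ℝ) : (!![x, z; z, y]).IsHermitian := by
  ext i j
  fin_cases i <;> fin_cases j <;> simp [Matrix.conjTranspose_apply]

/-- sign of a nonzero real: 1 if positive, -1 if negative (0 otherwise, unused). -/
noncomputable def sgn (x : ℝ) : ℤ := if 0 < x then 1 else if x < 0 then -1 else 0

lemma trace_eq_sum_eigen {n : ℕ} (M : Matrix (Fin n) (Fin n) ℝ) (hM : M.IsHermitian) :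
    M.trace = ∑ i, hM.eigenvalues i := by
  rw [hM.trace_eq_sum_eigenvalues]
  simp

lemma matSig2 (M : Matrix (Fin 2) (Fin 2) ℝ) (hM : M.IsHermitian) :
    matSig M hM = (if 0 < hM.eigenvalues 0 then 1 else 0) + (if 0 < hM.eigenvalues 1 then 1 else 0)
      - ((if hM.eigenvalues 0 < 0 then 1 else 0) + (if hM.eigenvalues 1 < 0 then 1 else 0)) := by
  unfold matSig
  rw [Finset.card_filter, Finset.card_filter, Fin.sum_univ_two, Fin.sum_univ_two]
  push_cast
  split_ifs <;> ring

lemma sig_of_det_trace (M : Matrix (Fin 2) (Fin 2) ℝ) (hM : M.IsHermitian) :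
    (M.det < 0 → matSig M hM = 0) ∧
    (0 < M.det → 0 < M.trace → matSig M hM = 2) ∧
    (0 < M.det → M.trace < 0 → matSig M hM = -2) := by
  have hdet : M.det = hM.eigenvalues 0 * hM.eigenvalues 1 := by
    have := hM.det_eq_prod_eigenvalues
    rw [this, Fin.prod_univ_two]
    norm_cast
  have htr : M.trace = hM.eigenvalues 0 + hM.eigenvalues 1 := by
    rw [trace_eq_sum_eigen M hM, Fin.sum_univ_two]
  set a := hM.eigenvalues 0
  set b := hM.eigenvalues 1
  rw [matSig2, show hM.eigenvalues 0 = a from rfl, show hM.eigenvalues 1 = b from rfl]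
  refine ⟨fun h => ?_, fun h ht => ?_, fun h ht => ?_⟩
  · rw [hdet] at h
    rcases lt_trichotomy a 0 with ha | ha | ha
    · have hb : 0 < b := by nlinarith
      simp [ha, hb, not_lt.mpr ha.le, not_lt.mpr hb.le]
    · simp [ha] at h
    · have hb : b < 0 := by nlinarith
      simp [ha, hb, not_lt.mpr ha.le, not_lt.mpr hb.le]
  · rw [hdet] at h; rw [htr] at ht
    have ha : 0 < a := by nlinarith
    have hb : 0 < b := by nlinarith
    simp [ha, hb, not_lt.mpr ha.le, not_lt.mpr hb.le]
  · rw [hdet] at h; rw [htr] at ht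
    have ha : a < 0 := by nlinarith
    have hb : b < 0 := by nlinarith
    simp [ha, hb, not_lt.mpr ha.le, not_lt.mpr hb.le]

theorem signature_eq_sum_of_signs (A B C : ℝ)
    (hA : A ≠ 0) (hB : B ≠ 0) (hC : C ≠ 0)
    (hD : A * B + A * C + B * C ≠ 0)
    (he : 0 < (A * B + A * C + B * C) / (A * B * C)) :
    matSig (!![A + C, -C; -C, B + C]) (symm2_isHermitian (A + C) (-C) (B + C)) =
      sgn A + sgn B + sgn C - 1 := by
  set M := !![A + C, -C; -C, B + C] with hMdef
  have hHerm := symm2_isHermitian (A + C) (-C) (B + C)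
  have hdet : M.det = A * B + A * C + B * C := by
    simp [hMdef, Matrix.det_fin_two_of]; ring
  have htr : M.trace = A + B + 2 * C := by
    simp [hMdef, Matrix.trace_fin_two_of]; ring
  obtain ⟨hneg, hpos, hposneg⟩ := sig_of_det_trace M hHerm
  -- sign of D equals sign of ABC
  have hsame : 0 < (A * B + A * C + B * C) * (A * B * C) := by
    rcases div_pos_iff.mp he with ⟨h1, h2⟩ | ⟨h1, h2⟩
    · positivity
    · nlinarith
  have hDpos : 0 < A * B * C → 0 < A * B + A * C + B * C := fun h => by
    rcases mul_pos_iff.mp hsame with ⟨h1, _⟩ | ⟨_, h2⟩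
    · exact h1
    · linarith
  have hDneg : A * B * C < 0 → A * B + A * C + B * C < 0 := fun h => by
    rcases mul_pos_iff.mp hsame with ⟨_, h2⟩ | ⟨h1, _⟩
    · linarith
    · exact h1
  rcases lt_trichotomy A 0 with ha | ha | ha
  · rcases lt_trichotomy B 0 with hb | hb | hb
    · rcases lt_trichotomy C 0 with hc | hc | hc
      · -- all negative: D > 0 but ABC < 0, contradiction
        exfalso
        have h1 := hDneg (mul_neg_of_pos_of_neg (mul_pos_of_neg_of_neg ha hb) hc)
        nlinarith [mul_pos_of_neg_of_neg ha hb, mul_pos_of_neg_of_neg ha hc,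
          mul_pos_of_neg_of_neg hb hc]
      · exact absurd hc hC
      · -- A<0, B<0, C>0: ABC>0 so D>0; trace < 0
        have hD' := hDpos (mul_pos (mul_pos_of_neg_of_neg ha hb) hc)
        have ht : M.trace < 0 := by
          rw [htr]; nlinarith [sq_nonneg (A + C), sq_nonneg C]
        rw [hposneg (by rw [hdet]; exact hD') ht]
        simp [sgn, ha, hc, not_lt.mpr ha.le, hb, not_lt.mpr hb.le]
    · exact absurd hb hB
    · rcases lt_trichotomy C 0 with hc | hc | hc
      · -- A<0, B>0, C<0: ABC>0 so D>0; trace < 0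
        have hD' := hDpos (mul_pos_of_neg_of_neg (mul_neg_of_neg_of_pos ha hb) hc)
        have ht : M.trace < 0 := by
          rw [htr]; nlinarith [sq_nonneg (B + C), sq_nonneg C]
        rw [hposneg (by rw [hdet]; exact hD') ht]
        simp [sgn, ha, hb, hc, not_lt.mpr ha.le, not_lt.mpr hc.le]
      · exact absurd hc hC
      · -- A<0, B>0, C>0: ABC<0 so D<0
        have hD' := hDneg (mul_neg_of_neg_of_pos (mul_neg_of_neg_of_pos ha hb) hc)
        rw [hneg (by rw [hdet]; exact hD')]
        simp [sgn, ha, hb, hc, not_lt.mpr ha.le]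
  · exact absurd ha hA
  · rcases lt_trichotomy B 0 with hb | hb | hb
    · rcases lt_trichotomy C 0 with hc | hc | hc
      · -- A>0, B<0, C<0: ABC>0 so D>0; trace < 0
        have hD' := hDpos (mul_pos_of_neg_of_neg (mul_neg_of_pos_of_neg ha hb) hc)
        have ht : M.trace < 0 := by
          rw [htr]; nlinarith [sq_nonneg (B + C), sq_nonneg C]
        rw [hposneg (by rw [hdet]; exact hD') ht]
        simp [sgn, ha, hb, hc, not_lt.mpr hb.le, not_lt.mpr hc.le]
      · exact absurd hc hC
      · -- A>0, B<0, C>0: ABC<0 so D<0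
        have hD' := hDneg (mul_neg_of_neg_of_pos (mul_neg_of_pos_of_neg ha hb) hc)
        rw [hneg (by rw [hdet]; exact hD')]
        simp [sgn, ha, hb, hc, not_lt.mpr hb.le]
    · exact absurd hb hB
    · rcases lt_trichotomy C 0 with hc | hc | hc
      · -- A>0, B>0, C<0: ABC<0 so D<0
        have hD' := hDneg (mul_neg_of_pos_of_neg (mul_pos ha hb) hc)
        rw [hneg (by rw [hdet]; exact hD')]
        simp [sgn, ha, hb, hc, not_lt.mpr hc.le]
      · exact absurd hc hC
      · -- all positive: D>0, trace>0
        have hD' := hDpos (mul_pos (mul_pos ha hb) hc)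
        have ht : 0 < M.trace := by rw [htr]; nlinarith
        rw [hpos (by rw [hdet]; exact hD') ht]
        simp [sgn, ha, hb, hc]
end

section
/- Fix integers n, a₀, b₀ with a₀b₀ ≠ 0 and define for real t with a₀b₀t² ≠ n² the function λ(t) = (2/(a₀b₀t² - n²)) · [ a₀t·v₂' + b₀t·v₂'' - u + (1/12)(n³ - n) + (1/24)(a₀ + b₀)t·(2n² - a₀b₀t² - 2) ] + σ(t)/4, where v₂', v₂'', u are fixed rational constants and σ(t) is the signature of [[a₀t, n],[n, b₀t]]. If a₀ + b₀ ≠ 0, then lim_{t → +∞} [ λ(t) + (1/12)(a₀ + b₀)t - σ_∞/4 ] = 0, where σ_∞ = 2 if a₀, b₀ > 0, σ_∞ = -2 if a₀, b₀ < 0, and σ_∞ = 0 if a₀b₀ < 0. -/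
open scoped Classical

open Filter

lemma trace_eq_sum_eig {m : ℕ} (A : Matrix (Fin m) (Fin m) ℝ) (hA : A.IsHermitian) :
    A.trace = ∑ i, hA.eigenvalues i := by
  conv_lhs => rw [hA.spectral_theorem]
  rw [Unitary.conjStarAlgAut_apply, Matrix.trace_mul_cycle]
  rw [(Matrix.mem_unitaryGroup_iff').mp (Matrix.IsHermitian.eigenvectorUnitary hA).2]
  simp [Matrix.trace, Matrix.diag]

lemma eig2_prod (x z y : ℝ) :
    (symm2_isHermitian x z y).eigenvalues 0 * (symm2_isHermitian x z y).eigenvalues 1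
      = x * y - z * z := by
  have h := (symm2_isHermitian x z y).det_eq_prod_eigenvalues
  rw [Matrix.det_fin_two_of, Fin.prod_univ_two] at h
  exact_mod_cast h.symm

lemma eig2_sum (x z y : ℝ) :
    (symm2_isHermitian x z y).eigenvalues 0 + (symm2_isHermitian x z y).eigenvalues 1
      = x + y := by
  have h := trace_eq_sum_eig _ (symm2_isHermitian x z y)
  rw [Fin.sum_univ_two] at h
  rw [← h, Matrix.trace_fin_two_of]

lemma matSig_pos (x z y : ℝ) (hdet : 0 < x * y - z * z) (htr : 0 < x + y) :
    matSig _ (symm2_isHermitian x z y) = 2 := by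
  have hp : (symm2_isHermitian x z y).eigenvalues 0 * (symm2_isHermitian x z y).eigenvalues 1
      = x * y - z * z := eig2_prod x z y
  have hs : (symm2_isHermitian x z y).eigenvalues 0 + (symm2_isHermitian x z y).eigenvalues 1
      = x + y := eig2_sum x z y
  have hp0 : 0 < (symm2_isHermitian x z y).eigenvalues 0 := by nlinarith
  have hp1 : 0 < (symm2_isHermitian x z y).eigenvalues 1 := by nlinarith
  have key : ∀ i : Fin 2, 0 < (symm2_isHermitian x z y).eigenvalues i := by
    intro i; fin_cases i
    · exact hp0
    · exact hp1
  unfold matSig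
  rw [Finset.filter_true_of_mem (fun i _ => key i),
    Finset.filter_false_of_mem (fun i _ => not_lt.2 (key i).le)]
  simp

lemma matSig_neg (x z y : ℝ) (hdet : 0 < x * y - z * z) (htr : x + y < 0) :
    matSig _ (symm2_isHermitian x z y) = -2 := by
  have hp : (symm2_isHermitian x z y).eigenvalues 0 * (symm2_isHermitian x z y).eigenvalues 1
      = x * y - z * z := eig2_prod x z y
  have hs : (symm2_isHermitian x z y).eigenvalues 0 + (symm2_isHermitian x z y).eigenvalues 1
      = x + y := eig2_sum x z y
  have hp0 : (symm2_isHermitian x z y).eigenvalues 0 < 0 := by nlinarith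
  have hp1 : (symm2_isHermitian x z y).eigenvalues 1 < 0 := by nlinarith
  have key : ∀ i : Fin 2, (symm2_isHermitian x z y).eigenvalues i < 0 := by
    intro i; fin_cases i
    · exact hp0
    · exact hp1
  unfold matSig
  rw [Finset.filter_true_of_mem (fun i _ => key i),
    Finset.filter_false_of_mem (fun i _ => not_lt.2 (key i).le)]
  simp

lemma matSig_indef (x z y : ℝ) (hdet : x * y - z * z < 0) :
    matSig _ (symm2_isHermitian x z y) = 0 := by
  have hp : (symm2_isHermitian x z y).eigenvalues 0 * (symm2_isHermitian x z y).eigenvalues 1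
      = x * y - z * z := eig2_prod x z y
  set e0 := (symm2_isHermitian x z y).eigenvalues 0 with he0
  set e1 := (symm2_isHermitian x z y).eigenvalues 1 with he1
  have huniv : (Finset.univ : Finset (Fin 2)) = {0, 1} := by decide
  unfold matSig
  rw [huniv]
  rcases lt_trichotomy e0 0 with h0 | h0 | h0
  · have h1 : 0 < e1 := by nlinarith
    rw [Finset.filter_insert, Finset.filter_insert, if_neg (not_lt.2 h0.le),
      if_pos h0, Finset.filter_singleton, Finset.filter_singleton,
      if_pos h1, if_neg (not_lt.2 h1.le)]
    simp
  · exfalso; rw [h0, zero_mul] at hp; linarith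
  · have h1 : e1 < 0 := by nlinarith
    rw [Finset.filter_insert, Finset.filter_insert, if_pos h0, if_neg (not_lt.2 h0.le),
      Finset.filter_singleton, Finset.filter_singleton,
      if_neg (not_lt.2 h1.le), if_pos h1]
    simp

lemma key_eq (n a₀ b₀ : ℤ) (v₂' v₂'' u : ℚ) (s : ℤ) (t : ℝ)
    (hD : (a₀ : ℝ) * b₀ * t ^ 2 - (n : ℝ) ^ 2 ≠ 0) :
    (2 / ((a₀ : ℝ) * b₀ * t ^ 2 - (n : ℝ) ^ 2)) *
        ((a₀ : ℝ) * t * (v₂' : ℝ) + (b₀ : ℝ) * t * (v₂'' : ℝ) - (u : ℝ) +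
          (1 / 12) * ((n : ℝ) ^ 3 - n) +
          (1 / 24) * ((a₀ : ℝ) + b₀) * t *
            (2 * (n : ℝ) ^ 2 - (a₀ : ℝ) * b₀ * t ^ 2 - 2)) +
      (s : ℝ) / 4 + (1 / 12) * ((a₀ : ℝ) + b₀) * t - (s : ℝ) / 4
    = ((2 * ((a₀ : ℝ) * v₂' + (b₀ : ℝ) * v₂'')
          + (1 / 12) * ((a₀ : ℝ) + b₀) * ((n : ℝ) ^ 2 - 2)) * t
        + 2 * (-(u : ℝ) + (1 / 12) * ((n : ℝ) ^ 3 - n)))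
      / ((a₀ : ℝ) * b₀ * t ^ 2 - (n : ℝ) ^ 2) := by
  field_simp
  ring

set_option maxHeartbeats 1600000 in
theorem casson_walker_asymptotics_case1
    (n a₀ b₀ : ℤ) (hab : a₀ * b₀ ≠ 0) (hsum : a₀ + b₀ ≠ 0)
    (v₂' v₂'' u : ℚ) (lam : ℝ → ℝ)
    (hlam : ∀ t : ℝ, (a₀ : ℝ) * b₀ * t ^ 2 - (n : ℝ) ^ 2 ≠ 0 →
      lam t = (2 / ((a₀ : ℝ) * b₀ * t ^ 2 - (n : ℝ) ^ 2)) *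
          ((a₀ : ℝ) * t * (v₂' : ℝ) + (b₀ : ℝ) * t * (v₂'' : ℝ) - (u : ℝ) +
            (1 / 12) * ((n : ℝ) ^ 3 - n) +
            (1 / 24) * ((a₀ : ℝ) + b₀) * t *
              (2 * (n : ℝ) ^ 2 - (a₀ : ℝ) * b₀ * t ^ 2 - 2)) +
        ((matSig (!![(a₀ : ℝ) * t, n; n, (b₀ : ℝ) * t])
          (symm2_isHermitian ((a₀ : ℝ) * t) n ((b₀ : ℝ) * t)) : ℝ)) / 4)
    (sigInfty : ℤ)
    (hsigInfty : sigInfty = if 0 < a₀ ∧ 0 < b₀ then 2 else if a₀ < 0 ∧ b₀ < 0 then -2 else 0) :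
    Tendsto (fun t : ℝ => lam t + (1 / 12) * ((a₀ : ℝ) + b₀) * t - (sigInfty : ℝ) / 4)
      atTop (nhds 0) := by
  have ha : a₀ ≠ 0 := fun h => hab (by simp [h])
  have hb : b₀ ≠ 0 := fun h => hab (by simp [h])
  have habR : (a₀ : ℝ) * b₀ ≠ 0 := by exact_mod_cast hab
  set c₁ : ℝ := 2 * ((a₀ : ℝ) * v₂' + (b₀ : ℝ) * v₂'')
      + (1 / 12) * ((a₀ : ℝ) + b₀) * ((n : ℝ) ^ 2 - 2) with hc₁
  set c₀ : ℝ := 2 * (-(u : ℝ) + (1 / 12) * ((n : ℝ) ^ 3 - n)) with hc₀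
  have hpoly : Tendsto (fun t : ℝ => (c₁ * t + c₀) / ((a₀ : ℝ) * b₀ * t ^ 2 - (n : ℝ) ^ 2))
      atTop (nhds 0) := by
    have h := Polynomial.div_tendsto_zero_of_degree_lt
      (Polynomial.C c₁ * Polynomial.X + Polynomial.C c₀)
      (Polynomial.C ((a₀ : ℝ) * b₀) * Polynomial.X ^ 2 + Polynomial.C 0 * Polynomial.X
        + Polynomial.C (-(n : ℝ) ^ 2))
      (by
        apply lt_of_le_of_lt (Polynomial.degree_linear_le)
        rw [Polynomial.degree_quadratic habR]
        norm_num)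
    have hQ : ∀ x : ℝ, Polynomial.eval x (Polynomial.C ((a₀ : ℝ) * b₀) * Polynomial.X ^ 2
        + Polynomial.C 0 * Polynomial.X + Polynomial.C (-(n : ℝ) ^ 2))
        = (a₀ : ℝ) * b₀ * x ^ 2 - (n : ℝ) ^ 2 := by
      intro x; simp; ring
    have hP : ∀ x : ℝ, Polynomial.eval x (Polynomial.C c₁ * Polynomial.X + Polynomial.C c₀)
        = c₁ * x + c₀ := by
      intro x; simp
    simpa only [hP, hQ] using h
  refine hpoly.congr' ?_
  filter_upwards [eventually_gt_atTop (max 1 (|(n : ℝ)| + 1))] with t ht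
  have ht1 : 1 < t := lt_of_le_of_lt (le_max_left _ _) ht
  have ht0 : 0 < t := lt_trans one_pos ht1
  have htn : |(n : ℝ)| + 1 < t := lt_of_le_of_lt (le_max_right _ _) ht
  have hn2 : (n : ℝ) ^ 2 < t ^ 2 := by
    have h1 : |(n : ℝ)| < t := by linarith
    nlinarith [abs_nonneg (n : ℝ), sq_abs (n : ℝ)]
  have ht2 : (0 : ℝ) < t ^ 2 := by positivity
  have main : ∀ _ : (a₀ : ℝ) * b₀ * t ^ 2 - (n : ℝ) ^ 2 ≠ 0,
      (matSig (!![(a₀ : ℝ) * t, n; n, (b₀ : ℝ) * t])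
        (symm2_isHermitian ((a₀ : ℝ) * t) n ((b₀ : ℝ) * t))) = sigInfty →
      lam t + (1 / 12) * ((a₀ : ℝ) + b₀) * t - (sigInfty : ℝ) / 4
        = (c₁ * t + c₀) / ((a₀ : ℝ) * b₀ * t ^ 2 - (n : ℝ) ^ 2) := by
    intro hD hsig
    rw [hlam t hD, hsig, hc₁, hc₀]
    exact key_eq n a₀ b₀ v₂' v₂'' u sigInfty t hD
  rcases lt_trichotomy a₀ 0 with ha' | ha' | ha'
  · rcases lt_trichotomy b₀ 0 with hb' | hb' | hb'
    · -- both negative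
      have haR : (a₀ : ℝ) ≤ -1 := by exact_mod_cast (show a₀ ≤ -1 by omega)
      have hbR : (b₀ : ℝ) ≤ -1 := by exact_mod_cast (show b₀ ≤ -1 by omega)
      have hab1 : (1 : ℝ) ≤ (a₀ : ℝ) * b₀ := by nlinarith
      have hdet : 0 < (a₀ : ℝ) * b₀ * t ^ 2 - (n : ℝ) ^ 2 := by
        nlinarith [mul_le_mul_of_nonneg_right hab1 (sq_nonneg t)]
      have hdet' : 0 < (a₀ : ℝ) * t * ((b₀ : ℝ) * t) - (n : ℝ) * n := by nlinarith [hdet]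
      have htr' : (a₀ : ℝ) * t + (b₀ : ℝ) * t < 0 := by
        nlinarith [mul_le_mul_of_nonneg_right (show (a₀ : ℝ) + b₀ ≤ -2 by linarith) ht0.le]
      refine (main hdet.ne' ?_).symm
      rw [matSig_neg _ _ _ hdet' htr', hsigInfty, if_neg (by omega), if_pos ⟨ha', hb'⟩]
    · exact absurd hb' hb
    · -- a neg, b pos
      have haR : (a₀ : ℝ) ≤ -1 := by exact_mod_cast (show a₀ ≤ -1 by omega)
      have hbR : (1 : ℝ) ≤ (b₀ : ℝ) := by exact_mod_cast (show 1 ≤ b₀ by omega)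
      have hab1 : (a₀ : ℝ) * b₀ ≤ -1 := by nlinarith
      have hdet : (a₀ : ℝ) * b₀ * t ^ 2 - (n : ℝ) ^ 2 < 0 := by
        nlinarith [mul_le_mul_of_nonneg_right hab1 (sq_nonneg t), sq_nonneg ((n : ℝ))]
      have hdet' : (a₀ : ℝ) * t * ((b₀ : ℝ) * t) - (n : ℝ) * n < 0 := by nlinarith [hdet]
      refine (main hdet.ne ?_).symm
      rw [matSig_indef _ _ _ hdet', hsigInfty, if_neg (by omega), if_neg (by omega)]
  · exact absurd ha' ha
  · rcases lt_trichotomy b₀ 0 with hb' | hb' | hb'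
    · -- a pos, b neg
      have haR : (1 : ℝ) ≤ (a₀ : ℝ) := by exact_mod_cast (show 1 ≤ a₀ by omega)
      have hbR : (b₀ : ℝ) ≤ -1 := by exact_mod_cast (show b₀ ≤ -1 by omega)
      have hab1 : (a₀ : ℝ) * b₀ ≤ -1 := by nlinarith
      have hdet : (a₀ : ℝ) * b₀ * t ^ 2 - (n : ℝ) ^ 2 < 0 := by
        nlinarith [mul_le_mul_of_nonneg_right hab1 (sq_nonneg t), sq_nonneg ((n : ℝ))]
      have hdet' : (a₀ : ℝ) * t * ((b₀ : ℝ) * t) - (n : ℝ) * n < 0 := by nlinarith [hdet]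
      refine (main hdet.ne ?_).symm
      rw [matSig_indef _ _ _ hdet', hsigInfty, if_neg (by omega), if_neg (by omega)]
    · exact absurd hb' hb
    · -- both positive
      have haR : (1 : ℝ) ≤ (a₀ : ℝ) := by exact_mod_cast (show 1 ≤ a₀ by omega)
      have hbR : (1 : ℝ) ≤ (b₀ : ℝ) := by exact_mod_cast (show 1 ≤ b₀ by omega)
      have hab1 : (1 : ℝ) ≤ (a₀ : ℝ) * b₀ := by nlinarith
      have hdet : 0 < (a₀ : ℝ) * b₀ * t ^ 2 - (n : ℝ) ^ 2 := by
        nlinarith [mul_le_mul_of_nonneg_right hab1 (sq_nonneg t)]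
      have hdet' : 0 < (a₀ : ℝ) * t * ((b₀ : ℝ) * t) - (n : ℝ) * n := by nlinarith [hdet]
      have htr' : 0 < (a₀ : ℝ) * t + (b₀ : ℝ) * t := by
        nlinarith [mul_le_mul_of_nonneg_right (show (2 : ℝ) ≤ (a₀ : ℝ) + b₀ by linarith) ht0.le]
      refine (main hdet.ne' ?_).symm
      rw [matSig_pos _ _ _ hdet' htr', hsigInfty, if_pos ⟨ha', hb'⟩]
end
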